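/- arXiv:2409.03338 — 6 statements merged into one kernel-verified Lean document; each statement's English description precedes it below -/
import Mathlib

section
/- Let T = U|T| be the polar decomposition of an invertible bounded operator T on a Hilbert space H, with U unitary. If m is the λ-weighted arithmetic mean, i.e., Δ_m(T) = (1-λ)|T|U + λU|T| for λ ∈ [0,1], then Δ_m(T) = U·((1-λ)U*|T|U + λ|T|), and since (1-λ)U*|T|U + λ|T| is positive (and invertible), this gives the polar decomposition of Δ_m(T); in particular |Δ_m(T)| = (1-λ)U*|T|U + λ|T|. -/
/-!
Since `U` is unitary, `|T| U = U (U* |T| U)`, so `Δ(T) = U R` with `R = (1-λ) U* |T| U + λ |T|`.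
As `|T| = U* T` is invertible, `|T|` and its unitary conjugate `U* |T| U` are strictly positive
(positive and invertible), and strictly positive elements of a C⋆-algebra form a convex set; so
`R` is strictly positive, and `Δ(T)* Δ(T) = R U* U R = R²`.
-/

lemma star_unitary_mul_mul_self {A : Type*} [Monoid A] [StarMul A] {U : A}
    (hU : U ∈ unitary A) {R : A} (hR : IsSelfAdjoint R) :
    star (U * R) * (U * R) = R * R := by
  rw [star_mul, hR.star_eq, mul_assoc, ← mul_assoc (star U), Unitary.star_mul_self_of_mem hU,
    one_mul]

lemma weightedMean_eq_unitary_mul {A R : Type*} [Ring A] [StarMul A] [Ring R] [Module R A]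
    [SMulCommClass R A A] {U : A} (hU : U ∈ unitary A) (P : A) (t : R) :
    (1 - t) • (P * U) + t • (U * P) = U * ((1 - t) • (star U * P * U) + t • P) := by
  rw [mul_add, mul_smul_comm, mul_smul_comm, ← mul_assoc, ← mul_assoc,
    Unitary.mul_star_self_of_mem hU, one_mul]

section CStarAlgebra

variable {A : Type*} [CStarAlgebra A] [PartialOrder A] [StarOrderedRing A]

lemma convex_setOf_isStrictlyPositive : Convex ℝ {a : A | IsStrictlyPositive a} :=
  convex_iff_forall_pos.mpr fun _ ha _ hb _ _ hs ht _ =>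
    isStrictlyPositive_add (.inl ⟨ha.smul hs, smul_nonneg ht.le hb.nonneg⟩)

lemma isStrictlyPositive_weightedMean_conj {U P : A} (hU : U ∈ unitary A)
    (hP : IsStrictlyPositive P) {t : ℝ} (ht : t ∈ Set.Icc (0 : ℝ) 1) :
    IsStrictlyPositive ((1 - t) • (star U * P * U) + t • P) := by
  have hUP : IsStrictlyPositive (star U * P * U) :=
    (Unitary.isUnit_coe (U := ⟨U, hU⟩)).isStrictlyPositive_star_left_conjugate_iff.mpr hP
  exact convex_setOf_isStrictlyPositive hUP hP (by linarith [ht.2]) ht.1 (by ring)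

end CStarAlgebra

theorem stmt0_general {H : Type*} [NormedAddCommGroup H] [InnerProductSpace ℂ H]
    [CompleteSpace H] (T U P : H →L[ℂ] H) (lam : ℝ)
    (hlam : lam ∈ Set.Icc (0 : ℝ) 1)
    (hU : U ∈ unitary (H →L[ℂ] H))
    (hP : P.IsPositive)
    (hT : T = U * P) (hTinv : IsUnit T) :
    (1 - lam) • (P * U) + lam • (U * P) =
      U * ((1 - lam) • (star U * P * U) + lam • P) ∧
    ((1 - lam) • (star U * P * U) + lam • P).IsPositive ∧
    IsUnit ((1 - lam) • (star U * P * U) + lam • P) ∧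
    star ((1 - lam) • (P * U) + lam • (U * P)) *
        ((1 - lam) • (P * U) + lam • (U * P)) =
      ((1 - lam) • (star U * P * U) + lam • P) *
        ((1 - lam) • (star U * P * U) + lam • P) := by
  have hPunit : IsUnit P := by
    rw [show P = star U * T by rw [hT, ← mul_assoc, Unitary.star_mul_self_of_mem hU, one_mul]]
    exact (Unitary.isUnit_coe (U := ⟨star U, Unitary.star_mem hU⟩)).mul hTinv
  have hR := isStrictlyPositive_weightedMean_conj hU
    (hPunit.isStrictlyPositive ((ContinuousLinearMap.nonneg_iff_isPositive P).mpr hP)) hlam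
  have hΔ := weightedMean_eq_unitary_mul hU P lam
  refine ⟨hΔ, (ContinuousLinearMap.nonneg_iff_isPositive _).mp hR.nonneg, hR.isUnit, ?_⟩
  rw [hΔ, star_unitary_mul_mul_self hU hR.isSelfAdjoint]

/-- For `T = U * P` the polar decomposition of an invertible operator `T`
(`U` unitary, `P = |T|` positive with `P * P = T* T`) and `λ ∈ [0,1]`, the weighted
arithmetic mean transform `Δ = (1-λ)•(P*U) + λ•(U*P)` satisfies
`Δ = U * R` where `R = (1-λ)•(U* P U) + λ•P` is positive and invertible, and
`R = |Δ|` (i.e. `Δ* Δ = R * R`). -/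
theorem stmt0 {H : Type*} [NormedAddCommGroup H] [InnerProductSpace ℂ H]
    [CompleteSpace H] (T U P : H →L[ℂ] H) (lam : ℝ)
    (hlam : lam ∈ Set.Icc (0 : ℝ) 1)
    (hU : U ∈ unitary (H →L[ℂ] H))
    (hP : P.IsPositive) (hP2 : P * P = star T * T)
    (hT : T = U * P) (hTinv : IsUnit T) :
    (1 - lam) • (P * U) + lam • (U * P) =
      U * ((1 - lam) • (star U * P * U) + lam • P) ∧
    ((1 - lam) • (star U * P * U) + lam • P).IsPositive ∧
    IsUnit ((1 - lam) • (star U * P * U) + lam • P) ∧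
    star ((1 - lam) • (P * U) + lam • (U * P)) *
        ((1 - lam) • (P * U) + lam • (U * P)) =
      ((1 - lam) • (star U * P * U) + lam • P) *
        ((1 - lam) • (star U * P * U) + lam • P) :=
  stmt0_general T U P lam hlam hU hP hT hTinv
end

section
/- Let T = U|T| ∈ B(H) be invertible with U unitary, λ ∈ (0,1), and suppose T* is semi-hyponormal, i.e., |T| ≤ U|T|U*. Then the sequence U^{*n}|T|U^n is decreasing and converges strongly to some positive L, and the weighted binomial averages Σ_{k=0}^n C(n,k)(1-λ)^k λ^{n-k} U^{*k}|T|U^k decrease to L as n → ∞. -/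
/-!
Conjugating `P ≤ U P U*` by `U` gives `U* P U ≤ P`, and conjugating that by `Uⁿ` shows that
`Aₙ = U*ⁿ P Uⁿ` is a decreasing sequence of positive operators. Such a sequence converges
strongly (Vigier): for `m ≤ n` the positive operator `D = Aₘ - Aₙ` satisfies
`‖D x‖² ≤ ‖D‖ ⟪D x, x⟫ ≤ ‖A₀‖ (⟪Aₘ x, x⟫ - ⟪Aₙ x, x⟫)`, and the real sequence `⟪Aₙ x, x⟫`
converges. The binomial averages `Sₙ(A)` satisfy Pascal's recursion
`Sₙ₊₁(A) = λ Sₙ(A) + (1 - λ) Sₙ(A ∘ succ)`, so they decrease along with `A`; they converge to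
the same limit because the binomial weights form a regular (Toeplitz) summation method: they are
nonnegative, sum to `1`, and each of them tends to `0`.
-/

open Filter Topology Finset
open scoped InnerProductSpace ComplexOrder

theorem cauchySeq_of_dist_sq_le_sub {α : Type*} [PseudoMetricSpace α] {u : ℕ → α} {g : ℕ → ℝ}
    (hg : CauchySeq g) (h : ∀ m n, m ≤ n → dist (u m) (u n) ^ 2 ≤ g m - g n) :
    CauchySeq u := by
  rw [Metric.cauchySeq_iff] at hg ⊢
  intro ε hε
  obtain ⟨N, hN⟩ := hg (ε ^ 2) (by positivity)
  have h_close : ∀ m n, N ≤ m → N ≤ n → m ≤ n → dist (u m) (u n) < ε := fun m n hm hn hmn =>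
    lt_of_pow_lt_pow_left₀ 2 hε.le <| (h m n hmn).trans_lt <|
      (le_abs_self _).trans_lt (Real.dist_eq (g m) (g n) ▸ hN m hm n hn)
  refine ⟨N, fun m hm n hn => ?_⟩
  rcases le_total m n with hmn | hnm
  · exact h_close m n hm hn hmn
  · exact dist_comm (u m) (u n) ▸ h_close n m hn hm hnm

namespace ContinuousLinearMap

variable {H : Type*} [NormedAddCommGroup H] [InnerProductSpace ℂ H] [CompleteSpace H]

theorem norm_apply_sq_le_of_nonneg {D : H →L[ℂ] H} (hD : 0 ≤ D) (x : H) :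
    ‖D x‖ ^ 2 ≤ ‖D‖ * RCLike.re ⟪D x, x⟫_ℂ := by
  obtain ⟨s, rfl⟩ := CStarAlgebra.nonneg_iff_eq_star_mul_self.mp hD
  have h_apply : ‖(star s * s) x‖ ≤ ‖s‖ * ‖s x‖ := by
    simpa using (star s).le_opNorm (s x)
  have h_inner : RCLike.re ⟪(star s * s) x, x⟫_ℂ = ‖s x‖ ^ 2 := by
    rw [star_eq_adjoint, mul_apply_eq_comp, adjoint_inner_left, inner_self_eq_norm_sq]
  rw [CStarRing.norm_star_mul_self, h_inner]
  nlinarith [norm_nonneg ((star s * s) x), norm_nonneg s, norm_nonneg (s x)]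

theorem cauchySeq_apply_of_antitone {A : ℕ → H →L[ℂ] H} (hA : Antitone A) (hA₀ : ∀ n, 0 ≤ A n)
    (x : H) : CauchySeq fun n => A n x := by
  have hf : Antitone fun n => RCLike.re ⟪A n x, x⟫_ℂ := fun m n hmn => by
    simpa [inner_sub_left] using ((le_def _ _).1 (hA hmn)).re_inner_nonneg_left x
  have hf_lim := tendsto_atTop_ciInf hf ⟨0, Set.forall_mem_range.2 fun n =>
    ((nonneg_iff_isPositive _).1 (hA₀ n)).re_inner_nonneg_left x⟩
  refine cauchySeq_of_dist_sq_le_sub (hf_lim.const_mul ‖A 0‖).cauchySeq fun m n hmn => ?_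
  have hD : 0 ≤ A m - A n := sub_nonneg.2 (hA hmn)
  have hD_norm : ‖A m - A n‖ ≤ ‖A 0‖ := CStarAlgebra.norm_le_norm_of_nonneg_of_le hD <|
    (sub_le_self _ (hA₀ n)).trans (hA m.zero_le)
  calc dist (A m x) (A n x) ^ 2 = ‖(A m - A n) x‖ ^ 2 := by rw [dist_eq_norm, sub_apply]
    _ ≤ ‖A m - A n‖ * RCLike.re ⟪(A m - A n) x, x⟫_ℂ := norm_apply_sq_le_of_nonneg hD x
    _ ≤ ‖A 0‖ * RCLike.re ⟪(A m - A n) x, x⟫_ℂ := by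
      gcongr
      exact ((nonneg_iff_isPositive _).1 hD).re_inner_nonneg_left x
    _ = ‖A 0‖ * RCLike.re ⟪A m x, x⟫_ℂ - ‖A 0‖ * RCLike.re ⟪A n x, x⟫_ℂ := by
      rw [sub_apply, inner_sub_left, map_sub, mul_sub]

theorem exists_isPositive_tendsto_apply_of_antitone {A : ℕ → H →L[ℂ] H} (hA : Antitone A)
    (hA₀ : ∀ n, 0 ≤ A n) :
    ∃ L : H →L[ℂ] H, L.IsPositive ∧ ∀ x, Tendsto (fun n => A n x) atTop (𝓝 (L x)) := by
  choose l hl using fun x => cauchySeq_tendsto_of_complete (cauchySeq_apply_of_antitone hA hA₀ x)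
  let L := continuousLinearMapOfTendsto A (tendsto_pi_nhds.2 hl)
  have hA_pos n := (nonneg_iff_isPositive _).1 (hA₀ n)
  refine ⟨L, (isPositive_iff L).2 ⟨fun x y => ?_, fun x => ?_⟩, hl⟩
  · exact tendsto_nhds_unique (((hl x).inner tendsto_const_nhds).congr fun n =>
      (hA_pos n).inner_left_eq_inner_right x y) (tendsto_const_nhds.inner (hl y))
  · exact ge_of_tendsto' ((hl x).inner tendsto_const_nhds) fun n => (hA_pos n).inner_nonneg_left x

end ContinuousLinearMap

theorem antitone_star_pow_mul_mul_pow {R : Type*} [Semiring R] [PartialOrder R] [StarRing R]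
    [StarOrderedRing R] {U P : R} (hU : star U * U = 1) (hP : P ≤ U * P * star U) :
    Antitone fun n : ℕ => star U ^ n * P * U ^ n := by
  have h_step : star U * P * U ≤ P := by
    simpa [← mul_assoc, hU, mul_assoc _ (star U) U] using star_left_conjugate_le_conjugate hP U
  refine antitone_nat_of_succ_le fun n => ?_
  calc star U ^ (n + 1) * P * U ^ (n + 1) = star (U ^ n) * (star U * P * U) * U ^ n := by
        simp only [star_pow, pow_succ, pow_succ' U, mul_assoc]
    _ ≤ star (U ^ n) * P * U ^ n := star_left_conjugate_le_conjugate h_step _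
    _ = star U ^ n * P * U ^ n := by rw [star_pow]

section BinomialAverage

variable {R M : Type*} [CommSemiring R] [AddCommMonoid M] [Module R M]

def binomialAverage (x y : R) (v : ℕ → M) (n : ℕ) : M :=
  ∑ k ∈ range (n + 1), ((n.choose k : R) * x ^ k * y ^ (n - k)) • v k

theorem binomialAverage_eq_sum_antidiagonal (x y : R) (v : ℕ → M) (n : ℕ) :
    binomialAverage x y v n =
      ∑ ij ∈ antidiagonal n, n.choose ij.1 • (x ^ ij.1 * y ^ ij.2) • v ij.1 := by
  rw [Nat.sum_antidiagonal_eq_sum_range_succ_mk]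
  simp [binomialAverage, mul_assoc, mul_smul, Nat.cast_smul_eq_nsmul]

theorem binomialAverage_succ (x y : R) (v : ℕ → M) (n : ℕ) :
    binomialAverage x y v (n + 1) =
      y • binomialAverage x y v n + x • binomialAverage x y (fun k => v (k + 1)) n := by
  simp only [binomialAverage_eq_sum_antidiagonal, sum_antidiagonal_choose_succ_nsmul
    (fun i j => (x ^ i * y ^ j) • v i), smul_sum]
  congr 1
  · refine sum_congr rfl fun ij _ => ?_
    rw [smul_comm y, smul_smul y, pow_succ, mul_comm y, mul_assoc]
  · refine sum_congr rfl fun ij hij => ?_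
    rw [Nat.choose_symm_of_eq_add (mem_antidiagonal.1 hij).symm, smul_comm x, smul_smul x,
      pow_succ', mul_assoc]

end BinomialAverage

theorem binomialAverage_antitone {R M : Type*} [CommSemiring R] [PartialOrder R] [IsOrderedRing R]
    [AddCommMonoid M] [PartialOrder M] [IsOrderedAddMonoid M] [Module R M] [PosSMulMono R M]
    {x y : R} (hx : 0 ≤ x) (hy : 0 ≤ y) (hxy : x + y = 1) {v : ℕ → M} (hv : Antitone v) :
    Antitone (binomialAverage x y v) := by
  refine antitone_nat_of_succ_le fun n => ?_
  have h_shift : binomialAverage x y (fun k => v (k + 1)) n ≤ binomialAverage x y v n :=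
    sum_le_sum fun k _ => smul_le_smul_of_nonneg_left (hv k.le_succ) (by positivity)
  calc binomialAverage x y v (n + 1)
      ≤ y • binomialAverage x y v n + x • binomialAverage x y v n := by
        rw [binomialAverage_succ]; gcongr
    _ = binomialAverage x y v n := by rw [← add_smul, add_comm, hxy, one_smul]

theorem tendsto_choose_mul_pow_mul_pow_sub {x y : ℝ} (hx : 0 ≤ x) (hy₀ : 0 < y) (hy₁ : y < 1)
    (k : ℕ) : Tendsto (fun n => (n.choose k : ℝ) * x ^ k * y ^ (n - k)) atTop (𝓝 0) := by
  have h_lim := (tendsto_pow_const_mul_const_pow_of_lt_one k hy₀.le hy₁).mul_const ((x / y) ^ k)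
  rw [zero_mul] at h_lim
  refine squeeze_zero' (Eventually.of_forall fun n => by positivity) ?_ h_lim
  filter_upwards [eventually_ge_atTop k] with n hn
  calc (n.choose k : ℝ) * x ^ k * y ^ (n - k) = n.choose k * y ^ n * (x / y) ^ k := by
        rw [← pow_sub_mul_pow y hn, div_pow]; field_simp
    _ ≤ (n : ℝ) ^ k * y ^ n * (x / y) ^ k := by gcongr; exact_mod_cast Nat.choose_le_pow n k

theorem tendsto_sum_smul_of_tendsto {E : Type*} [NormedAddCommGroup E] [NormedSpace ℝ E]
    {w : ℕ → ℕ → ℝ} (hw₀ : ∀ n k, 0 ≤ w n k) (hw₁ : ∀ n, ∑ k ∈ range (n + 1), w n k = 1)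
    (hw : ∀ k, Tendsto (fun n => w n k) atTop (𝓝 0)) {v : ℕ → E} {l : E}
    (hv : Tendsto v atTop (𝓝 l)) :
    Tendsto (fun n => ∑ k ∈ range (n + 1), w n k • v k) atTop (𝓝 l) := by
  have h_sub : ∀ n, ∑ k ∈ range (n + 1), w n k • v k - l =
      ∑ k ∈ range (n + 1), w n k • (v k - l) := fun n => by
    simp only [smul_sub, sum_sub_distrib, ← sum_smul, hw₁, one_smul]
  rw [← tendsto_sub_nhds_zero_iff, funext h_sub, NormedAddGroup.tendsto_nhds_zero]
  have hu := tendsto_sub_nhds_zero_iff.2 hv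
  obtain ⟨C, hC⟩ := hu.norm.bddAbove_range
  intro ε hε
  obtain ⟨K, hK⟩ := eventually_atTop.1 (NormedAddGroup.tendsto_nhds_zero.1 hu (ε / 2) (half_pos hε))
  have h_head : Tendsto (fun n => ∑ k ∈ range K, w n k * C) atTop (𝓝 0) := by
    simpa using tendsto_finsetSum (range K) fun k _ => (hw k).mul_const C
  filter_upwards [h_head.eventually (gt_mem_nhds (half_pos hε)), eventually_ge_atTop K]
    with n h_small hn
  calc ‖∑ k ∈ range (n + 1), w n k • (v k - l)‖
      ≤ ∑ k ∈ range (n + 1), w n k * ‖v k - l‖ := norm_sum_le_of_le _ fun k _ => by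
        rw [norm_smul, Real.norm_of_nonneg (hw₀ n k)]
    _ = ∑ k ∈ range K, w n k * ‖v k - l‖ + ∑ k ∈ Ico K (n + 1), w n k * ‖v k - l‖ :=
        (sum_range_add_sum_Ico _ (by omega)).symm
    _ ≤ ∑ k ∈ range K, w n k * C + ∑ k ∈ Ico K (n + 1), w n k * (ε / 2) := by
        gcongr with k _ k hk
        · exact hw₀ n k
        · exact hC ⟨k, rfl⟩
        · exact hw₀ n k
        · exact (hK k (mem_Ico.1 hk).1).le
    _ ≤ ∑ k ∈ range K, w n k * C + ε / 2 := by
        have h_tail : ∑ k ∈ Ico K (n + 1), w n k ≤ 1 := hw₁ n ▸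
          sum_le_sum_of_subset_of_nonneg (fun k hk => mem_range.2 (mem_Ico.1 hk).2)
            fun k _ _ => hw₀ n k
        rw [← sum_mul (Ico K (n + 1))]
        gcongr
        exact mul_le_of_le_one_left (half_pos hε).le h_tail
    _ < ε := by linarith

theorem tendsto_binomialAverage {E : Type*} [NormedAddCommGroup E] [NormedSpace ℝ E]
    {x y : ℝ} (hx : 0 ≤ x) (hy₀ : 0 < y) (hy₁ : y < 1) (hxy : x + y = 1) {v : ℕ → E} {l : E}
    (hv : Tendsto v atTop (𝓝 l)) : Tendsto (binomialAverage x y v) atTop (𝓝 l) :=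
  tendsto_sum_smul_of_tendsto (fun n k => by positivity)
    (fun n => by
      have h_sum := add_pow x y n
      rw [hxy, one_pow] at h_sum
      exact (sum_congr rfl fun k _ => by ring).trans h_sum.symm)
    (tendsto_choose_mul_pow_mul_pow_sub hx hy₀ hy₁) hv

theorem stmt6_general {H : Type*} [NormedAddCommGroup H] [InnerProductSpace ℂ H]
    [CompleteSpace H] (U P : H →L[ℂ] H) (lam : ℝ)
    (hlam : lam ∈ Set.Ioo (0 : ℝ) 1)
    (hU : U ∈ unitary (H →L[ℂ] H))
    (hP : P.IsPositive)
    (hsemi : P ≤ U * P * star U) :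
    Antitone (fun n : ℕ => (star U) ^ n * P * U ^ n) ∧
    ∃ L : H →L[ℂ] H, L.IsPositive ∧
      (∀ x : H, Filter.Tendsto (fun n : ℕ => ((star U) ^ n * P * U ^ n) x)
        Filter.atTop (nhds (L x))) ∧
      Antitone (fun n : ℕ => ∑ k ∈ Finset.range (n + 1),
        ((n.choose k : ℝ) * (1 - lam) ^ k * lam ^ (n - k)) •
          ((star U) ^ k * P * U ^ k)) ∧
      (∀ x : H, Filter.Tendsto
        (fun n : ℕ => (∑ k ∈ Finset.range (n + 1),
          ((n.choose k : ℝ) * (1 - lam) ^ k * lam ^ (n - k)) •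
            ((star U) ^ k * P * U ^ k)) x)
        Filter.atTop (nhds (L x))) := by
  obtain ⟨hlam₀, hlam₁⟩ := hlam
  set A : ℕ → H →L[ℂ] H := fun n => star U ^ n * P * U ^ n
  have hA : Antitone A := antitone_star_pow_mul_mul_pow (Unitary.star_mul_self_of_mem hU) hsemi
  have hA₀ (n : ℕ) : 0 ≤ A n := by
    simpa only [A, star_pow] using
      star_left_conjugate_nonneg ((ContinuousLinearMap.nonneg_iff_isPositive P).2 hP) (U ^ n)
  obtain ⟨L, hL, hlim⟩ := ContinuousLinearMap.exists_isPositive_tendsto_apply_of_antitone hA hA₀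
  have hx : 0 ≤ 1 - lam := sub_nonneg.2 hlam₁.le
  have hxy : 1 - lam + lam = 1 := sub_add_cancel 1 lam
  refine ⟨hA, L, hL, hlim, binomialAverage_antitone hx hlam₀.le hxy hA, fun x => ?_⟩
  refine (tendsto_binomialAverage hx hlam₀ hlam₁ hxy (hlim x)).congr fun n => ?_
  simp only [binomialAverage, _root_.sum_apply, _root_.smul_apply, A]

/-- If `T = U * P` is invertible with `U` unitary and `T*` is
semi-hyponormal (`P ≤ U P U*`), and `λ ∈ (0,1)`, then `U^{*n} P U^n` is decreasing and
converges strongly to some positive `L`, and the weighted binomial averages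
`Σ_{k=0}^n C(n,k)(1-λ)^k λ^{n-k} U^{*k} P U^k` are decreasing and converge strongly
to `L` as well. -/
theorem stmt6 {H : Type*} [NormedAddCommGroup H] [InnerProductSpace ℂ H]
    [CompleteSpace H] (T U P : H →L[ℂ] H) (lam : ℝ)
    (hlam : lam ∈ Set.Ioo (0 : ℝ) 1)
    (hU : U ∈ unitary (H →L[ℂ] H))
    (hP : P.IsPositive) (hP2 : P * P = star T * T)
    (hT : T = U * P) (hTinv : IsUnit T)
    (hsemi : P ≤ U * P * star U) :
    Antitone (fun n : ℕ => (star U) ^ n * P * U ^ n) ∧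
    ∃ L : H →L[ℂ] H, L.IsPositive ∧
      (∀ x : H, Filter.Tendsto (fun n : ℕ => ((star U) ^ n * P * U ^ n) x)
        Filter.atTop (nhds (L x))) ∧
      Antitone (fun n : ℕ => ∑ k ∈ Finset.range (n + 1),
        ((n.choose k : ℝ) * (1 - lam) ^ k * lam ^ (n - k)) •
          ((star U) ^ k * P * U ^ k)) ∧
      (∀ x : H, Filter.Tendsto
        (fun n : ℕ => (∑ k ∈ Finset.range (n + 1),
          ((n.choose k : ℝ) * (1 - lam) ^ k * lam ^ (n - k)) •
            ((star U) ^ k * P * U ^ k)) x)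
        Filter.atTop (nhds (L x))) :=
  stmt6_general U P lam hlam hU hP hsemi
end

section
/- Let T be an invertible semi-hyponormal operator with polar decomposition T = U|T|, and let L = strong-lim_{n→∞} U^{*n}|T|U^n. Then UL is normal. (Key facts: UL = LU since U*LU = L, making UL quasinormal; an invertible quasinormal operator is normal.) -/
/-!
Each `A n := star U ^ n * P * U ^ n` is self-adjoint, and self-adjointness passes to strong
limits, so `L` is self-adjoint. Since `U * star U = 1`, conjugating by one more power of `U`
shifts the sequence by one: `A n * U = U * A (n + 1)`, and in the limit `L * U = U * L`.
A unitary times a self-adjoint operator commuting with it is normal.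
-/

open Filter Topology

lemma pow_mul_mul_pow_mul_eq_mul_pow_succ {M : Type*} [Monoid M] {u v : M} (h : u * v = 1)
    (p : M) (n : ℕ) : v ^ n * p * u ^ n * u = u * (v ^ (n + 1) * p * u ^ (n + 1)) := by
  rw [pow_succ' v, pow_succ u]
  simp only [← mul_assoc, h, one_mul]

lemma isStarNormal_mul_of_mem_unitary {R : Type*} [Monoid R] [StarMul R] {u a : R}
    (hu : u ∈ unitary R) (ha : IsSelfAdjoint a) (hua : Commute u a) :
    IsStarNormal (u * a) := by
  refine ⟨?_⟩
  change star (u * a) * (u * a) = u * a * star (u * a)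
  rw [star_mul, ha.star_eq]
  calc a * star u * (u * a) = a * a := by
        rw [mul_assoc, ← mul_assoc (star u), Unitary.star_mul_self_of_mem hu, one_mul]
    _ = u * (a * a) * star u := by
        rw [(hua.mul_right hua).eq, mul_assoc, Unitary.mul_star_self_of_mem hu, mul_one]
    _ = u * a * (a * star u) := by simp only [mul_assoc]

namespace ContinuousLinearMap

lemma commute_of_tendsto_apply_of_mul_eq {R M : Type*} [Semiring R] [TopologicalSpace M]
    [T2Space M] [AddCommMonoid M] [Module R M] {A : ℕ → M →L[R] M} {U L : M →L[R] M}
    (hA : ∀ x, Tendsto (fun n => A n x) atTop (𝓝 (L x)))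
    (hshift : ∀ n, A n * U = U * A (n + 1)) : Commute U L := by
  ext x
  have hLU : Tendsto (fun n => U (A (n + 1) x)) atTop (𝓝 (L (U x))) :=
    (hA (U x)).congr fun n => congrArg (· x) (hshift n)
  have hUL : Tendsto (fun n => U (A (n + 1) x)) atTop (𝓝 (U (L x))) :=
    (U.continuous.tendsto _).comp ((hA x).comp (tendsto_add_atTop_nat 1))
  exact tendsto_nhds_unique hUL hLU

lemma isSelfAdjoint_of_tendsto_apply {ι 𝕜 E : Type*} {l : Filter ι} [l.NeBot] [RCLike 𝕜]
    [NormedAddCommGroup E] [InnerProductSpace 𝕜 E] [CompleteSpace E]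
    {A : ι → E →L[𝕜] E} {L : E →L[𝕜] E}
    (hsa : ∀ i, IsSelfAdjoint (A i)) (hA : ∀ x, Tendsto (fun i => A i x) l (𝓝 (L x))) :
    IsSelfAdjoint L := by
  refine isSelfAdjoint_iff_isSymmetric.mpr fun x y => tendsto_nhds_unique
    ((hA x).inner tendsto_const_nhds) ?_
  exact (tendsto_const_nhds.inner (hA y)).congr fun i =>
    ((isSelfAdjoint_iff_isSymmetric.mp (hsa i)) x y).symm

end ContinuousLinearMap

open ContinuousLinearMap in
theorem stmt7_general {H : Type*} [NormedAddCommGroup H] [InnerProductSpace ℂ H]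
    [CompleteSpace H] (U P L : H →L[ℂ] H)
    (hU : U ∈ unitary (H →L[ℂ] H))
    (hP : P.IsPositive)
    (hL : ∀ x : H, Filter.Tendsto (fun n : ℕ => ((star U) ^ n * P * U ^ n) x)
      Filter.atTop (nhds (L x))) :
    IsStarNormal (U * L) := by
  have hLsa : IsSelfAdjoint L := isSelfAdjoint_of_tendsto_apply
    (fun n => star_pow U n ▸ hP.isSelfAdjoint.conjugate' (U ^ n)) hL
  have hUL : Commute U L := commute_of_tendsto_apply_of_mul_eq hL
    (pow_mul_mul_pow_mul_eq_mul_pow_succ (Unitary.mul_star_self_of_mem hU) P)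
  exact isStarNormal_mul_of_mem_unitary hU hLsa hUL

/-- Let `T = U * P` be an invertible semi-hyponormal operator
(`U` unitary, `P = |T|`, `U P U* ≤ P`) and let `L` be the strong operator limit of
`U^{*n} P U^n`. Then `U * L` is normal. -/
theorem stmt7 {H : Type*} [NormedAddCommGroup H] [InnerProductSpace ℂ H]
    [CompleteSpace H] (T U P L : H →L[ℂ] H)
    (hU : U ∈ unitary (H →L[ℂ] H))
    (hP : P.IsPositive) (hP2 : P * P = star T * T)
    (hT : T = U * P) (hTinv : IsUnit T)
    (hsemi : U * P * star U ≤ P)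
    (hL : ∀ x : H, Filter.Tendsto (fun n : ℕ => ((star U) ^ n * P * U ^ n) x)
      Filter.atTop (nhds (L x))) :
    IsStarNormal (U * L) :=
  stmt7_general U P L hU hP hL
end

section
/- Let T = U|T| ∈ M_m(ℂ) be the polar decomposition of an invertible centered matrix (so U is unitary). Then there exists a positive integer n with n ≤ m! such that |T| = U^{*n}|T|U^n. -/
/-!
The matrices `A k = U^{*k} P U^k` are commuting Hermitian matrices, so a single invertible `V`
diagonalizes all of them at once. Each `A k` is unitarily conjugate to `P`, so its diagonal is a
rearrangement of the eigenvalues of `P`; there are at most `m!` such rearrangements, hence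
`A j = A k` for some `j < k ≤ m!`, and conjugating back by `U^j` gives `P = U^{*(k-j)} P U^{k-j}`.
-/

open scoped ComplexOrder

/-- A matrix polar decomposition `T = U * P` is centered: the family
`{U^{*m} P U^m, P, U^n P U^{*n}}` is a commuting set. -/
def MatCentered {m : ℕ} (U P : Matrix (Fin m) (Fin m) ℂ) : Prop :=
  ∀ j k : ℕ,
    Commute ((star U) ^ j * P * U ^ j) ((star U) ^ k * P * U ^ k) ∧
    Commute ((star U) ^ j * P * U ^ j) (U ^ k * P * (star U) ^ k) ∧
    Commute (U ^ j * P * (star U) ^ j) (U ^ k * P * (star U) ^ k)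

open Polynomial Matrix Finset

theorem exists_perm_comp_eq_of_map_univ_eq {ι α : Type*} [Fintype ι] {f g : ι → α}
    (h : univ.val.map f = univ.val.map g) : ∃ σ : Equiv.Perm ι, g ∘ σ = f := by
  classical
  have hcard (c : α) : Fintype.card {i // f i = c} = Fintype.card {i // g i = c} := by
    simpa [Fintype.card_subtype, Multiset.count_map, eq_comm, card_def] using
      congrArg (Multiset.count c) h
  exact ⟨Equiv.ofFiberEquiv fun c ↦ Fintype.equivOfCardEq (hcard c),
    funext (Equiv.ofFiberEquiv_map _)⟩

theorem Matrix.roots_charpoly_diagonal {R n : Type*} [CommRing R] [IsDomain R] [Fintype n]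
    [DecidableEq n] (d : n → R) : (diagonal d).charpoly.roots = univ.val.map d := by
  rw [charpoly_diagonal, roots_prod _ _ (prod_ne_zero_iff.mpr fun i _ ↦ X_sub_C_ne_zero (d i))]
  simp

theorem Matrix.charpoly_star_mul_mul_of_mem_unitary {R n : Type*} [CommRing R] [StarRing R]
    [Fintype n] [DecidableEq n] {V : Matrix n n R} (hV : V ∈ unitary (Matrix n n R))
    (A : Matrix n n R) : (star V * A * V).charpoly = A.charpoly := by
  rw [mul_assoc, charpoly_mul_comm, mul_assoc, Unitary.mul_star_self_of_mem hV, mul_one]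

theorem eq_star_pow_mul_mul_pow_of_conj_eq {R : Type*} [Monoid R] [StarMul R] {U : R}
    (hU : U ∈ unitary R) {P : R} {j n : ℕ}
    (h : star U ^ j * P * U ^ j = star U ^ (j + n) * P * U ^ (j + n)) :
    P = star U ^ n * P * U ^ n := by
  have hUj : U ^ j * star U ^ j = 1 := by
    rw [← star_pow]; exact Unitary.mul_star_self_of_mem (pow_mem hU j)
  have hcancel (X : R) : U ^ j * (star U ^ j * X * U ^ j) * star U ^ j = X := by
    simp only [← mul_assoc, hUj, one_mul]; rw [mul_assoc, hUj, mul_one]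
  calc P = U ^ j * (star U ^ j * P * U ^ j) * star U ^ j := (hcancel P).symm
    _ = U ^ j * (star U ^ j * (star U ^ n * P * U ^ n) * U ^ j) * star U ^ j := by
        rw [h, pow_add, add_comm, pow_add]; simp only [mul_assoc]
    _ = star U ^ n * P * U ^ n := hcancel _

theorem exists_lt_le_factorial_eq_of_forall_perm {ι α : Type*} [Fintype ι]
    (d : ℕ → ι → α) (hd : ∀ k, ∃ σ : Equiv.Perm ι, d 0 ∘ σ = d k) :
    ∃ j k, j < k ∧ k ≤ (Fintype.card ι).factorial ∧ d j = d k := by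
  classical
  set N := (Fintype.card ι).factorial
  have hmaps : ∀ k ∈ range (N + 1), d k ∈ univ.image fun σ : Equiv.Perm ι ↦ d 0 ∘ σ :=
    fun k _ ↦ mem_image.mpr ((hd k).imp fun σ hσ ↦ ⟨mem_univ σ, hσ⟩)
  have hcard : #(univ.image fun σ : Equiv.Perm ι ↦ d 0 ∘ σ) < #(range (N + 1)) := by
    grw [card_image_le, card_univ, Fintype.card_perm, card_range]
    exact N.lt_succ_self
  obtain ⟨j, hj, k, hk, hne, hjk⟩ := exists_ne_map_eq_of_card_lt_of_maps_to hcard hmaps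
  rw [mem_range, Nat.lt_succ_iff] at hj hk
  rcases hne.lt_or_gt with h | h
  exacts [⟨j, k, h, hk, hjk⟩, ⟨k, j, h, hj, hjk.symm⟩]

theorem LinearMap.IsSymmetric.exists_basis_apply_eq_smul_of_commute {𝕜 E ι n : Type*} [RCLike 𝕜]
    [NormedAddCommGroup E] [InnerProductSpace 𝕜 E] [FiniteDimensional 𝕜 E] [Fintype n]
    {T : ι → Module.End 𝕜 E} (hT : ∀ i, (T i).IsSymmetric)
    (hC : Pairwise (Function.onFun Commute T))
    (hn : Module.finrank 𝕜 E = Fintype.card n) :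
    ∃ (b : Module.Basis n 𝕜 E) (d : ι → n → 𝕜), ∀ k i, T k (b i) = d k i • b i := by
  classical
  have hint := directSum_isInternal_of_pairwise_commute hT hC
  let b := hint.collectedBasis fun χ ↦
    Module.finBasis 𝕜 (⨅ j, Module.End.eigenspace (T j) (χ j) : Submodule 𝕜 E)
  let e := b.indexEquiv ((Module.finBasisOfFinrankEq 𝕜 E hn).reindex (Fintype.equivFin n).symm)
  refine ⟨b.reindex e, fun k i ↦ (e.symm i).1 k, fun k i ↦ ?_⟩
  rw [Module.Basis.reindex_apply]
  exact Module.End.mem_eigenspace_iff.mp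
    ((Submodule.mem_iInf _).mp (hint.collectedBasis_mem _ (e.symm i)) k)

theorem Matrix.IsHermitian.exists_units_conj_diagonal_of_commute {𝕜 n ι : Type*} [RCLike 𝕜]
    [Fintype n] [DecidableEq n] {A : ι → Matrix n n 𝕜} (hA : ∀ i, (A i).IsHermitian)
    (hC : Pairwise (Function.onFun Commute A)) :
    ∃ (V : (Matrix n n 𝕜)ˣ) (d : ι → n → 𝕜), ∀ k, A k = V.val * diagonal (d k) * V⁻¹.val := by
  obtain ⟨b, d, hbd⟩ := LinearMap.IsSymmetric.exists_basis_apply_eq_smul_of_commute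
    (T := fun k ↦ toEuclideanLin (A k)) (fun k ↦ isSymmetric_toEuclideanLin_iff.mpr (hA k))
    (fun j k hjk ↦ (hC hjk).map (toLpLinAlgEquiv 2)) finrank_euclideanSpace
  let b₀ := (EuclideanSpace.basisFun n 𝕜).toBasis
  refine ⟨⟨b₀.toMatrix b, b.toMatrix b₀, b₀.toMatrix_mul_toMatrix_flip b,
    b.toMatrix_mul_toMatrix_flip b₀⟩, d, fun k ↦ ?_⟩
  have hdiag : LinearMap.toMatrix b b (toEuclideanLin (A k)) = diagonal (d k) := by
    ext i j
    simp only [LinearMap.toMatrix_apply, hbd, map_smul, Module.Basis.repr_self,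
      Finsupp.smul_single, smul_eq_mul, mul_one, Finsupp.single_apply, diagonal_apply]
    grind
  calc A k = LinearMap.toMatrix b₀ b₀ (toEuclideanLin (A k)) := by
        rw [toEuclideanLin_eq_toLin_orthonormal, LinearMap.toMatrix_toLin]
    _ = b₀.toMatrix b * LinearMap.toMatrix b b (toEuclideanLin (A k)) * b.toMatrix b₀ :=
        (basis_toMatrix_mul_linearMap_toMatrix_mul_basis_toMatrix b₀ b b₀ b _).symm
    _ = _ := by rw [hdiag]; rfl

theorem stmt8_general {m : ℕ} (U P : Matrix (Fin m) (Fin m) ℂ)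
    (hU : U ∈ unitary (Matrix (Fin m) (Fin m) ℂ))
    (hP : P.PosSemidef)
    (hcent : MatCentered U P) :
    ∃ n : ℕ, 0 < n ∧ n ≤ Nat.factorial m ∧ P = (star U) ^ n * P * U ^ n := by
  set A : ℕ → Matrix (Fin m) (Fin m) ℂ := fun k ↦ star U ^ k * P * U ^ k
  have hA (k : ℕ) : (A k).IsHermitian := by
    simpa [A, star_pow, star_eq_conjTranspose] using isHermitian_conjTranspose_mul_mul (U ^ k) hP.1
  obtain ⟨V, d, hVd⟩ := IsHermitian.exists_units_conj_diagonal_of_commute hA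
    fun j k _ ↦ (hcent j k).1
  have hcharpoly (k : ℕ) : (diagonal (d k)).charpoly = P.charpoly := by
    calc (diagonal (d k)).charpoly = (A k).charpoly := by simp [hVd k]
      _ = P.charpoly := by
        simpa [A, star_pow] using charpoly_star_mul_mul_of_mem_unitary (pow_mem hU k) P
  have hperm (k : ℕ) : ∃ σ : Equiv.Perm (Fin m), d 0 ∘ σ = d k :=
    exists_perm_comp_eq_of_map_univ_eq <| by
      rw [← roots_charpoly_diagonal, ← roots_charpoly_diagonal, hcharpoly, hcharpoly]
  obtain ⟨j, k, hjk, hk, hd⟩ := exists_lt_le_factorial_eq_of_forall_perm d hperm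
  obtain ⟨n, rfl⟩ := Nat.exists_eq_add_of_lt hjk
  rw [Fintype.card_fin] at hk
  refine ⟨n + 1, n.succ_pos, by omega, eq_star_pow_mul_mul_pow_of_conj_eq hU (j := j) ?_⟩
  change A j = A (j + n + 1)
  rw [hVd, hVd, hd]

/-- If `T = U * P ∈ M_m(ℂ)` is the polar decomposition of an invertible
centered matrix, then there is a positive integer `n ≤ m!` with `P = U^{*n} P U^n`. -/
theorem stmt8 {m : ℕ} (T U P : Matrix (Fin m) (Fin m) ℂ)
    (hU : U ∈ unitary (Matrix (Fin m) (Fin m) ℂ))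
    (hP : P.PosSemidef) (hP2 : P * P = star T * T)
    (hT : T = U * P) (hTinv : IsUnit T)
    (hcent : MatCentered U P) :
    ∃ n : ℕ, 0 < n ∧ n ≤ Nat.factorial m ∧ P = (star U) ^ n * P * U ^ n :=
  stmt8_general U P hU hP hcent
end

section
/- Let T ∈ B(H) be invertible. Then T is an absolutely norm attaining (AN) operator if and only if T^{-1} is an absolutely minimum attaining (AM) operator; moreover, for invertible T, T is AN if and only if T* is AN. -/
/-!
Write `N(T, M)` for the set of values `‖T y‖`, `y` a unit vector of `M`: `T` is AN (resp. AM)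
when `N(T, M)` has a greatest (resp. least) element for every nonzero closed subspace `M`.

If `S = T⁻¹`, normalising `S w` for `w ∈ M` shows `N(T, S M) = N(S, M)⁻¹`, and `M ↦ S M`
permutes the nonzero closed subspaces; since inversion reverses the order on positive reals,
maxima for `T` correspond to minima for `S`.

For the adjoint, use the polar decomposition `T = U |T|`, `U` unitary, so that `T* = |T| U*`.
Multiplying on the left by a unitary does not change `‖T y‖`, and multiplying on the right by
one replaces `N(T, M)` by `N(T, U M)`; hence `T`, `|T|` and `T*` are AN together.
-/

/-- `T` is absolutely norm attaining: on every nonzero closed subspace `M`, the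
restriction `T|_M` attains its norm `sup{‖Ty‖ : y ∈ M, ‖y‖ = 1}`. -/
def IsAN {H : Type*} [NormedAddCommGroup H] [InnerProductSpace ℂ H]
    [CompleteSpace H] (T : H →L[ℂ] H) : Prop :=
  ∀ M : Submodule ℂ H, IsClosed (M : Set H) → M ≠ ⊥ →
    ∃ x : H, x ∈ M ∧ ‖x‖ = 1 ∧
      ‖T x‖ = sSup ((fun y => ‖T y‖) '' {y : H | y ∈ M ∧ ‖y‖ = 1})

/-- `T` is absolutely minimum attaining: on every nonzero closed subspace `M`, the
restriction `T|_M` attains its minimum modulus `inf{‖Ty‖ : y ∈ M, ‖y‖ = 1}`. -/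
def IsAM {H : Type*} [NormedAddCommGroup H] [InnerProductSpace ℂ H]
    [CompleteSpace H] (T : H →L[ℂ] H) : Prop :=
  ∀ M : Submodule ℂ H, IsClosed (M : Set H) → M ≠ ⊥ →
    ∃ x : H, x ∈ M ∧ ‖x‖ = 1 ∧
      ‖T x‖ = sInf ((fun y => ‖T y‖) '' {y : H | y ∈ M ∧ ‖y‖ = 1})

open Set
open scoped Pointwise
open Topology

section NormedSpace

variable {𝕜 E : Type*} [RCLike 𝕜] [NormedAddCommGroup E] [NormedSpace 𝕜 E]

def normsOnUnitSphere (T : E →L[𝕜] E) (M : Submodule 𝕜 E) : Set ℝ :=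
  (fun y => ‖T y‖) '' {y | y ∈ M ∧ ‖y‖ = 1}

lemma normsOnUnitSphere_eq_image_div (T : E →L[𝕜] E) (M : Submodule 𝕜 E) :
    normsOnUnitSphere T M = (fun y => ‖T y‖ / ‖y‖) '' ((M : Set E) \ {0}) := by
  ext r
  constructor
  · rintro ⟨y, ⟨hyM, hy⟩, rfl⟩
    exact ⟨y, ⟨hyM, by rintro rfl; simp at hy⟩, by simp [hy]⟩
  · rintro ⟨y, ⟨hyM, hy0⟩, rfl⟩
    refine ⟨(‖y‖⁻¹ : 𝕜) • y, ⟨M.smul_mem _ hyM, norm_smul_inv_norm hy0⟩, ?_⟩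
    simp [norm_smul, div_eq_inv_mul]

lemma normsOnUnitSphere_map_symm (e : E ≃L[𝕜] E) (M : Submodule 𝕜 E) :
    normsOnUnitSphere (e : E →L[𝕜] E) (M.map ((e.symm : E →L[𝕜] E) : E →ₗ[𝕜] E)) =
      (normsOnUnitSphere (e.symm : E →L[𝕜] E) M)⁻¹ := by
  have hmap : (M.map ((e.symm : E →L[𝕜] E) : E →ₗ[𝕜] E) : Set E) \ {0} =
      e.symm '' ((M : Set E) \ {0}) := by
    rw [image_sdiff e.symm.injective, image_singleton, map_zero, Submodule.map_coe]
    rfl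
  rw [normsOnUnitSphere_eq_image_div, normsOnUnitSphere_eq_image_div, hmap, image_image,
    ← image_inv_eq_inv, image_image]
  simp [inv_div]

lemma normsOnUnitSphere_mul_of_norm_map (T : E →L[𝕜] E) {u : E →L[𝕜] E}
    (hu : ∀ x, ‖u x‖ = ‖x‖) (M : Submodule 𝕜 E) :
    normsOnUnitSphere (T * u) M = normsOnUnitSphere T (M.map (u : E →ₗ[𝕜] E)) := by
  have hsphere : {z | z ∈ M.map (u : E →ₗ[𝕜] E) ∧ ‖z‖ = 1} = u '' {y | y ∈ M ∧ ‖y‖ = 1} := by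
    ext z
    constructor
    · rintro ⟨⟨y, hyM, rfl⟩, hz⟩
      exact ⟨y, ⟨hyM, (hu y).symm.trans hz⟩, rfl⟩
    · rintro ⟨y, ⟨hyM, hy⟩, rfl⟩
      exact ⟨⟨y, hyM, rfl⟩, (hu y).trans hy⟩
  rw [normsOnUnitSphere, normsOnUnitSphere, hsphere, image_image]
  rfl

lemma normsOnUnitSphere_subset_Ioi {T : E →L[𝕜] E} (hT : Function.Injective T)
    (M : Submodule 𝕜 E) : normsOnUnitSphere T M ⊆ Ioi 0 := by
  rintro _ ⟨y, ⟨-, hy⟩, rfl⟩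
  exact norm_pos_iff.mpr ((map_ne_zero_iff T hT).mpr (norm_ne_zero_iff.mp (by simp [hy])))

lemma Submodule.isClosed_map_of_isClosedEmbedding {f : E →L[𝕜] E} (hf : IsClosedEmbedding f)
    {M : Submodule 𝕜 E} (hM : IsClosed (M : Set E)) :
    IsClosed (M.map (f : E →ₗ[𝕜] E) : Set E) := by
  rw [Submodule.map_coe]
  exact hf.isClosedMap _ hM

lemma Submodule.map_ne_bot_of_injective {f : E →L[𝕜] E} (hf : Function.Injective f)
    {M : Submodule 𝕜 E} (hM : M ≠ ⊥) : M.map (f : E →ₗ[𝕜] E) ≠ ⊥ := by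
  rwa [← Submodule.map_bot (f : E →ₗ[𝕜] E), (Submodule.map_injective_of_injective hf).ne_iff]

end NormedSpace

lemma IsGreatest.isLeast_of_inv {V : Set ℝ} (hV : V ⊆ Ioi 0) {a : ℝ} (h : IsGreatest V⁻¹ a) :
    IsLeast V a⁻¹ := by
  have hanti : AntitoneOn (·⁻¹) V⁻¹ :=
    antitoneOn_inv_pos.mono fun x hx => show 0 < x from inv_pos.mp (hV (mem_inv.mp hx))
  simpa [image_inv_eq_inv] using hanti.map_isGreatest h

lemma IsLeast.isGreatest_of_inv {V : Set ℝ} (hV : V ⊆ Ioi 0) {a : ℝ} (h : IsLeast V⁻¹ a) :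
    IsGreatest V a⁻¹ := by
  have hanti : AntitoneOn (·⁻¹) V⁻¹ :=
    antitoneOn_inv_pos.mono fun x hx => show 0 < x from inv_pos.mp (hV (mem_inv.mp hx))
  simpa [image_inv_eq_inv] using hanti.map_isLeast h

lemma IsUnit.exists_mem_unitary_eq_mul {A : Type*} [Monoid A] [StarMul A] {a r : A}
    (ha : IsUnit a) (hr : IsSelfAdjoint r) (hrr : r * r = star a * a) :
    ∃ u ∈ unitary A, a = u * r := by
  have hr' : IsUnit r := by
    rw [← isUnit_pow_iff two_ne_zero, sq, hrr]
    exact ha.star.mul ha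
  lift r to Aˣ using hr'
  refine ⟨a * ↑r⁻¹, ?_, by simp⟩
  refine (ha.mul r⁻¹.isUnit).mem_unitary_of_star_mul_self ?_
  calc star (a * ↑r⁻¹) * (a * ↑r⁻¹) = star (↑r⁻¹ : A) * (star a * a) * ↑r⁻¹ := by
        simp only [star_mul, mul_assoc]
    _ = star (↑r⁻¹ : A) * star (r : A) := by
        rw [← hrr, hr.star_eq, mul_assoc, Units.mul_inv_cancel_right]
    _ = 1 := by rw [← star_mul, Units.mul_inv, star_one]

section Hilbert

variable {H : Type*} [NormedAddCommGroup H] [InnerProductSpace ℂ H] [CompleteSpace H]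

lemma isAN_iff_forall_exists_isGreatest (T : H →L[ℂ] H) :
    IsAN T ↔ ∀ M : Submodule ℂ H, IsClosed (M : Set H) → M ≠ ⊥ →
      ∃ a, IsGreatest (normsOnUnitSphere T M) a := by
  have hbdd (M : Submodule ℂ H) : BddAbove (normsOnUnitSphere T M) := by
    refine ⟨‖T‖, ?_⟩
    rintro _ ⟨y, ⟨-, hy⟩, rfl⟩
    simpa [hy] using T.le_opNorm y
  refine forall₃_congr fun M _ _ => ⟨?_, ?_⟩
  · rintro ⟨x, hxM, hx, hTx⟩
    exact ⟨‖T x‖, ⟨x, ⟨hxM, hx⟩, rfl⟩, fun _ ha => hTx ▸ le_csSup (hbdd M) ha⟩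
  · rintro ⟨a, ha, hmax⟩
    have hsup : sSup (normsOnUnitSphere T M) = a := IsGreatest.csSup_eq ⟨ha, hmax⟩
    obtain ⟨x, ⟨hxM, hx⟩, rfl⟩ := ha
    exact ⟨x, hxM, hx, hsup.symm⟩

lemma isAM_iff_forall_exists_isLeast (T : H →L[ℂ] H) :
    IsAM T ↔ ∀ M : Submodule ℂ H, IsClosed (M : Set H) → M ≠ ⊥ →
      ∃ a, IsLeast (normsOnUnitSphere T M) a := by
  have hbdd (M : Submodule ℂ H) : BddBelow (normsOnUnitSphere T M) :=
    ⟨0, by rintro _ ⟨y, -, rfl⟩; positivity⟩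
  refine forall₃_congr fun M _ _ => ⟨?_, ?_⟩
  · rintro ⟨x, hxM, hx, hTx⟩
    exact ⟨‖T x‖, ⟨x, ⟨hxM, hx⟩, rfl⟩, fun _ ha => hTx ▸ csInf_le (hbdd M) ha⟩
  · rintro ⟨a, ha, hmin⟩
    have hinf : sInf (normsOnUnitSphere T M) = a := IsLeast.csInf_eq ⟨ha, hmin⟩
    obtain ⟨x, ⟨hxM, hx⟩, rfl⟩ := ha
    exact ⟨x, hxM, hx, hinf.symm⟩

theorem isAN_iff_isAM_symm (e : H ≃L[ℂ] H) :
    IsAN (e : H →L[ℂ] H) ↔ IsAM (e.symm : H →L[ℂ] H) := by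
  have hclosed (f : H ≃L[ℂ] H) {M : Submodule ℂ H} (hM : IsClosed (M : Set H)) :
      IsClosed (M.map ((f : H →L[ℂ] H) : H →ₗ[ℂ] H) : Set H) :=
    Submodule.isClosed_map_of_isClosedEmbedding (f := (f : H →L[ℂ] H))
      f.toHomeomorph.isClosedEmbedding hM
  rw [isAN_iff_forall_exists_isGreatest, isAM_iff_forall_exists_isLeast]
  constructor
  · intro h M hM hM0
    obtain ⟨a, ha⟩ :=
      h _ (hclosed e.symm hM) (Submodule.map_ne_bot_of_injective e.symm.injective hM0)
    rw [normsOnUnitSphere_map_symm] at ha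
    exact ⟨a⁻¹, ha.isLeast_of_inv (normsOnUnitSphere_subset_Ioi e.symm.injective M)⟩
  · intro h M hM hM0
    obtain ⟨a, ha⟩ := h _ (hclosed e hM) (Submodule.map_ne_bot_of_injective e.injective hM0)
    have hsymm := normsOnUnitSphere_map_symm e.symm M
    rw [e.symm_symm] at hsymm
    rw [hsymm] at ha
    exact ⟨a⁻¹, ha.isGreatest_of_inv (normsOnUnitSphere_subset_Ioi e.injective M)⟩

lemma isAN_congr {A B : H →L[ℂ] H} (h : ∀ x, ‖A x‖ = ‖B x‖) : IsAN A ↔ IsAN B := by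
  simp only [IsAN, h]

lemma IsAN.mul_of_norm_map {T u : H →L[ℂ] H} (hT : IsAN T) (hu : ∀ x, ‖u x‖ = ‖x‖) :
    IsAN (T * u) := by
  rw [isAN_iff_forall_exists_isGreatest] at hT ⊢
  intro M hM hM0
  have hiso : Isometry u := AddMonoidHomClass.isometry_of_norm u hu
  rw [normsOnUnitSphere_mul_of_norm_map T hu]
  exact hT _ (Submodule.isClosed_map_of_isClosedEmbedding hiso.isClosedEmbedding hM)
    (Submodule.map_ne_bot_of_injective hiso.injective hM0)

lemma isAN_mul_unitary_iff (T : H →L[ℂ] H) {u : H →L[ℂ] H} (hu : u ∈ unitary (H →L[ℂ] H)) :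
    IsAN (T * u) ↔ IsAN T := by
  refine ⟨fun h => ?_, fun h => h.mul_of_norm_map (Unitary.norm_map ⟨u, hu⟩)⟩
  simpa [mul_assoc, Unitary.mul_star_self_of_mem hu] using
    h.mul_of_norm_map (Unitary.norm_map ⟨star u, Unitary.star_mem hu⟩)

lemma isAN_unitary_mul_iff (T : H →L[ℂ] H) {u : H →L[ℂ] H} (hu : u ∈ unitary (H →L[ℂ] H)) :
    IsAN (u * T) ↔ IsAN T :=
  isAN_congr fun x => Unitary.norm_map ⟨u, hu⟩ (T x)

lemma isAN_star_iff {T : H →L[ℂ] H} (hT : IsUnit T) : IsAN (star T) ↔ IsAN T := by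
  have hR : IsSelfAdjoint (CFC.abs T) := (CFC.abs_nonneg T).isSelfAdjoint
  obtain ⟨u, hu, hTu⟩ := hT.exists_mem_unitary_eq_mul hR (CFC.abs_mul_abs T)
  set R := CFC.abs T
  have hstar : star T = R * star u := by rw [hTu, star_mul, hR.star_eq]
  rw [hstar, isAN_mul_unitary_iff _ (Unitary.star_mem hu), hTu, isAN_unitary_mul_iff _ hu]

end Hilbert

/-- For invertible `T` (with inverse `S`): `T` is AN iff `T⁻¹` is AM;
moreover `T` is AN iff `T*` is AN. -/
theorem stmt18 {H : Type*} [NormedAddCommGroup H] [InnerProductSpace ℂ H]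
    [CompleteSpace H] (T S : H →L[ℂ] H)
    (hTS : T * S = 1) (hST : S * T = 1) :
    (IsAN T ↔ IsAM S) ∧ (IsAN T ↔ IsAN (star T)) :=
  ⟨isAN_iff_isAM_symm (ContinuousLinearEquiv.unitsEquiv ℂ H ⟨T, S, hTS, hST⟩),
    (isAN_star_iff ⟨⟨T, S, hTS, hST⟩, rfl⟩).symm⟩
end

section
/- Let T ∈ M_m(ℂ) be invertible with polar decomposition T = U|T|, where U = V* D V with V unitary and D = diag(α₁,...,α_m) having pairwise distinct unimodular diagonal entries. Then for λ ∈ (0,1), V*[Σ_{k=0}^n C(n,k)(1-λ)^k λ^{n-k} D^{*k} V|T|V* D^k]V converges as n → ∞ to V*(I ∘ V|T|V*)V, where ∘ is the Hadamard (entrywise) product with the identity matrix (i.e., the diagonal part of V|T|V*). Key scalar fact: for distinct unimodular α_i ≠ α_j, ((1-λ) + λ α_j \bar{α_i})^n → 0 as n → ∞. -/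
/-!
Conjugating by `diagonal α` multiplies the `(i, j)` entry of `A = V P V*` by `(conj αᵢ αⱼ)^k`, so by
the binomial theorem the `(i, j)` entry of the `n`-th average is `((1 - λ) conj αᵢ αⱼ + λ)^n Aᵢⱼ`.
On the diagonal the base is `1`; off the diagonal `conj αᵢ αⱼ` is a unimodular number other than `1`,
and by strict convexity of the closed unit disc the base has modulus `< 1`, so the entry tends to `0`.
-/

open scoped ComplexOrder

open Matrix Filter Topology Finset

section

variable {n : Type*} [Fintype n] [DecidableEq n]

lemma star_diagonal_pow_mul_mul_diagonal_pow_apply {R : Type*} [CommSemiring R] [StarRing R]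
    (d : n → R) (A : Matrix n n R) (k : ℕ) (i j : n) :
    (star (diagonal d) ^ k * A * diagonal d ^ k) i j = (star (d i) * d j) ^ k * A i j := by
  rw [star_eq_conjTranspose, diagonal_conjTranspose, diagonal_pow, diagonal_pow,
    mul_diagonal, diagonal_mul]
  simp only [Pi.pow_apply, Pi.star_apply]
  ring

lemma sum_binomial_smul_conj_diagonal_pow_apply (d : n → ℂ) (A : Matrix n n ℂ) (lam : ℝ)
    (N : ℕ) (i j : n) :
    (∑ k ∈ range (N + 1), ((N.choose k : ℝ) * (1 - lam) ^ k * lam ^ (N - k)) •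
        (star (diagonal d) ^ k * A * diagonal d ^ k)) i j =
      ((1 - lam) * (star (d i) * d j) + lam) ^ N * A i j := by
  rw [add_pow, sum_mul, Matrix.sum_apply]
  refine sum_congr rfl fun k _ => ?_
  rw [Matrix.smul_apply, star_diagonal_pow_mul_mul_diagonal_pow_apply, Complex.real_smul]
  push_cast
  rw [mul_pow, mul_pow]
  ring

lemma norm_one_sub_mul_add_lt_one {lam : ℝ} (hlam : lam ∈ Set.Ioo 0 1) {z : ℂ}
    (hz : ‖z‖ = 1) (hz1 : z ≠ 1) : ‖(1 - lam) * z + lam‖ < 1 := by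
  have := norm_combo_lt_of_ne hz.le norm_one.le hz1 (sub_pos.2 hlam.2) hlam.1 (by ring)
  simpa [Complex.real_smul] using this

theorem tendsto_sum_binomial_smul_conj_diagonal_pow {d : n → ℂ} (hd : ∀ i, ‖d i‖ = 1)
    (hd_inj : Function.Injective d) (A : Matrix n n ℂ) {lam : ℝ} (hlam : lam ∈ Set.Ioo 0 1) :
    Tendsto (fun N : ℕ => ∑ k ∈ range (N + 1),
        ((N.choose k : ℝ) * (1 - lam) ^ k * lam ^ (N - k)) •
          (star (diagonal d) ^ k * A * diagonal d ^ k)) atTop (𝓝 (1 ⊙ A)) := by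
  refine tendsto_pi_nhds.2 fun i => tendsto_pi_nhds.2 fun j => ?_
  simp only [sum_binomial_smul_conj_diagonal_pow_apply, one_hadamard, diagonal_apply, diag_apply]
  have hd0 : ∀ i, d i ≠ 0 := fun i => norm_ne_zero_iff.1 ((hd i).trans_ne one_ne_zero)
  have hinv : ∀ i, star (d i) = (d i)⁻¹ := fun i => (Complex.inv_eq_conj (hd i)).symm
  split_ifs with hij
  · subst hij
    simp [hinv, inv_mul_cancel₀ (hd0 i)]
  · have hz : ‖star (d i) * d j‖ = 1 := by simp [hd]
    have hz1 : star (d i) * d j ≠ 1 := by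
      rw [hinv, Ne, inv_mul_eq_one₀ (hd0 i)]
      exact hd_inj.ne hij
    simpa using (tendsto_pow_atTop_nhds_zero_of_norm_lt_one
      (norm_one_sub_mul_add_lt_one hlam hz hz1)).mul_const (A i j)

end

theorem stmt19_general {m : ℕ} (P V : Matrix (Fin m) (Fin m) ℂ) (α : Fin m → ℂ)
    (lam : ℝ) (hlam : lam ∈ Set.Ioo (0 : ℝ) 1)
    (hαuni : ∀ i, ‖α i‖ = 1)
    (hαinj : Function.Injective α) :
    Filter.Tendsto
      (fun n : ℕ => star V *
        (∑ k ∈ Finset.range (n + 1),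
          ((n.choose k : ℝ) * (1 - lam) ^ k * lam ^ (n - k)) •
            ((star (Matrix.diagonal α)) ^ k * (V * P * star V) *
              (Matrix.diagonal α) ^ k)) * V)
      Filter.atTop
      (nhds (star V *
        Matrix.hadamard (1 : Matrix (Fin m) (Fin m) ℂ) (V * P * star V) * V)) := by
  have hconj : Continuous fun X : Matrix (Fin m) (Fin m) ℂ => star V * X * V :=
    (continuous_const.matrix_mul continuous_id).matrix_mul continuous_const
  exact (hconj.tendsto _).comp
    (tendsto_sum_binomial_smul_conj_diagonal_pow hαuni hαinj (V * P * star V) hlam)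

/-- Let `T = U * P ∈ M_m(ℂ)` be invertible with `U = V* D V`, `V` unitary,
`D = diag(α₁,...,α_m)` with pairwise distinct unimodular entries. For `λ ∈ (0,1)`,
`V*[Σ_{k=0}^n C(n,k)(1-λ)^k λ^{n-k} D^{*k} (V P V*) D^k]V` converges as `n → ∞` to
`V*(I ∘ V P V*)V`, where `∘` is the Hadamard product (so `I ∘ A` is the diagonal part
of `A`). -/
theorem stmt19 {m : ℕ} (T U P V : Matrix (Fin m) (Fin m) ℂ) (α : Fin m → ℂ)
    (lam : ℝ) (hlam : lam ∈ Set.Ioo (0 : ℝ) 1)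
    (hV : V ∈ unitary (Matrix (Fin m) (Fin m) ℂ))
    (hαuni : ∀ i, ‖α i‖ = 1)
    (hαinj : Function.Injective α)
    (hUVD : U = star V * Matrix.diagonal α * V)
    (hP : P.PosSemidef) (hP2 : P * P = star T * T)
    (hT : T = U * P) (hTinv : IsUnit T) :
    Filter.Tendsto
      (fun n : ℕ => star V *
        (∑ k ∈ Finset.range (n + 1),
          ((n.choose k : ℝ) * (1 - lam) ^ k * lam ^ (n - k)) •
            ((star (Matrix.diagonal α)) ^ k * (V * P * star V) *
              (Matrix.diagonal α) ^ k)) * V)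
      Filter.atTop
      (nhds (star V *
        Matrix.hadamard (1 : Matrix (Fin m) (Fin m) ℂ) (V * P * star V) * V)) :=
  stmt19_general P V α lam hlam hαuni hαinj
end
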